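/- arXiv:1905.01021 — 2 statements merged into one kernel-verified Lean document; each statement's English description precedes it below -/
import Mathlib

section
/- Theorem (conditional asymptotic tightness is necessary for conditional weak convergence). Let H' be a Borel measurable and tight mapping from some probability space into l^∞(F), and assume that sup_{h∈BL₁(l^∞(F))}|E_d h(H_N') − E h(H')| → 0 in outer probability (resp. outer almost surely). Then the sequence {H_N'} satisfies the probability (resp. almost-sure) version of conditional asymptotic tightness (CAT). -/
open MeasureTheory Filter Topology Metric Set
open scoped ENNReal NNReal Classical

noncomputable section

namespace Paper

/-! ### Modes of convergence.
`asv = false` is the "in (outer) probability" version, `asv = true` the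
"(outer) almost sure" version.  Note that a Mathlib `Measure` applied to an
arbitrary (possibly non-measurable) set is exactly the induced outer measure,
so the in-probability versions below are literally convergence in *outer*
probability when the functions involved are non-measurable. -/

def ConvZero {Ω : Type*} [MeasurableSpace Ω] (μ : Measure Ω) (asv : Bool)
    (A : ℕ → Ω → ℝ) : Prop :=
  if asv then ∀ᵐ ω ∂μ, Tendsto (fun N => A N ω) atTop (nhds 0)
  else ∀ ε : ℝ, 0 < ε → Tendsto (fun N => μ {ω | ε < |A N ω|}) atTop (nhds 0)

/-- Convergence to zero in outer probability (`asv = false`), respectively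
outer almost surely (`asv = true`, i.e. existence of measurable majorants
converging to zero almost surely). -/
def OuterConvZero {Ω : Type*} [MeasurableSpace Ω] (μ : Measure Ω) (asv : Bool)
    (Z : ℕ → Ω → ℝ) : Prop :=
  if asv then ∃ Δ : ℕ → Ω → ℝ, (∀ N, Measurable (Δ N)) ∧ (∀ N ω, |Z N ω| ≤ Δ N ω) ∧
      ∀ᵐ ω ∂μ, Tendsto (fun N => Δ N ω) atTop (nhds 0)
  else ∀ ε : ℝ, 0 < ε → Tendsto (fun N => μ {ω | ε < |Z N ω|}) atTop (nhds 0)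

/-- Divergence to `+∞` in probability, respectively almost surely. -/
def ConvTop {Ω : Type*} [MeasurableSpace Ω] (μ : Measure Ω) (asv : Bool)
    (A : ℕ → Ω → ℝ) : Prop :=
  if asv then ∀ᵐ ω ∂μ, Tendsto (fun N => A N ω) atTop atTop
  else ∀ Mb : ℝ, Tendsto (fun N => μ {ω | A N ω ≤ Mb}) atTop (nhds 0)

/-- A property holding with probability tending to one, respectively
eventually almost surely. -/
def EventuallyHolds {Ω : Type*} [MeasurableSpace Ω] (μ : Measure Ω) (asv : Bool)
    (P : ℕ → Ω → Prop) : Prop :=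
  if asv then ∀ᵐ ω ∂μ, ∀ᶠ N in atTop, P N ω
  else Tendsto (fun N => μ {ω | ¬ P N ω}) atTop (nhds 0)

/-- Outer expectation `E* g`. -/
def outerExp {Ω : Type*} [MeasurableSpace Ω] (μ : Measure Ω) (g : Ω → ℝ) : ℝ :=
  sInf {x : ℝ | ∃ u : Ω → ℝ, Measurable u ∧ (∀ ω, g ω ≤ u ω) ∧ Integrable u μ ∧ x = ∫ ω, u ω ∂μ}

/-! ### Bounded Lipschitz test functions -/

/-- `BL₁(E)` for a metric space `E`. -/
def BL1 (E : Type*) [PseudoMetricSpace E] : Set (E → ℝ) :=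
  {h | (∀ z, h z ∈ Icc (0:ℝ) 1) ∧ ∀ z₁ z₂ : E, |h z₁ - h z₂| ≤ dist z₁ z₂}

/-- `BL₁(ℓ^∞(ι))`, realized on the space of all real functions on `ι`:
`[0,1]`-valued functions which are `1`-Lipschitz with respect to the
(extended) sup-distance. -/
def BL1' (ι : Type*) : Set ((ι → ℝ) → ℝ) :=
  {h | (∀ z, h z ∈ Icc (0:ℝ) 1) ∧
      ∀ z₁ z₂ : ι → ℝ, ∀ Mb : ℝ, (∀ f, |z₁ f - z₂ f| ≤ Mb) → |h z₁ - h z₂| ≤ Mb}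

/-- Continuity with respect to the (extended) sup-distance on `ι → ℝ`. -/
def SupContinuous {ι : Type*} (h : (ι → ℝ) → ℝ) : Prop :=
  ∀ z : ι → ℝ, ∀ ε : ℝ, 0 < ε → ∃ δ : ℝ, 0 < δ ∧
    ∀ z' : ι → ℝ, (∀ f, |z f - z' f| ≤ δ) → |h z - h z'| < ε

/-- Continuity with respect to the sup-distance on pairs. -/
def SupContinuous2 {ι : Type*} (h : (ι → ℝ) × (ι → ℝ) → ℝ) : Prop :=
  ∀ z : (ι → ℝ) × (ι → ℝ), ∀ ε : ℝ, 0 < ε → ∃ δ : ℝ, 0 < δ ∧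
    ∀ z' : (ι → ℝ) × (ι → ℝ),
      (∀ f, |z.1 f - z'.1 f| ≤ δ) → (∀ f, |z.2 f - z'.2 f| ≤ δ) → |h z - h z'| < ε

/-! ### Semimetrics -/

structure IsSemimetric {ι : Type*} (ρ : ι → ι → ℝ) : Prop where
  nonneg : ∀ f g, 0 ≤ ρ f g
  refl : ∀ f, ρ f f = 0
  symm : ∀ f g, ρ f g = ρ g f
  triangle : ∀ f g h, ρ f h ≤ ρ f g + ρ g h

/-- A subset `𝓕` is totally bounded with respect to the semimetric `ρ`. -/
def TotallyBoundedIn {ι : Type*} (ρ : ι → ι → ℝ) (𝓕 : Set ι) : Prop :=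
  ∀ ε : ℝ, 0 < ε → ∃ T : Finset ι, ∀ f ∈ 𝓕, ∃ g ∈ T, ρ f g < ε

/-- The whole index type is totally bounded with respect to `ρ`. -/
def TotallyBoundedRho {ι : Type*} (ρ : ι → ι → ℝ) : Prop :=
  ∀ ε : ℝ, 0 < ε → ∃ T : Finset ι, ∀ f : ι, ∃ g ∈ T, ρ f g < ε

/-! ### The general conditional weak convergence framework (Section 3).
The underlying probability space is a product `Ωp × Ωd`, where `Ωp` carries
the population variables and `Ωd` the design randomization; the design
probability/expectation is obtained by integrating out the `Ωd`-coordinate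
with the population coordinate fixed. -/

section General

variable {Ωp Ωd Ω' : Type*} [MeasurableSpace Ωp] [MeasurableSpace Ωd] [MeasurableSpace Ω']
variable {ι : Type*} [TopologicalSpace ι]

/-- Conditional asymptotic tightness (CAT). -/
def CAT (μp : Measure Ωp) (μd : Measure Ωd) (asv : Bool)
    (H : ℕ → Ωp × Ωd → BoundedContinuousFunction ι ℝ) : Prop :=
  ∀ η : ℝ, 0 < η → ∃ K : Set (BoundedContinuousFunction ι ℝ), IsCompact K ∧
    ∀ δ : ℝ, 0 < δ → ∃ A : ℕ → Ωp × Ωd → ℝ, (∀ N, Measurable (A N)) ∧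
      ConvZero (μp.prod μd) asv A ∧
      ∀ N ω, 1 - η ≤ (μd {ωd | H N (ω.1, ωd) ∈ thickening δ K}).toReal + A N ω

/-- CAT of the marginals. -/
def MarginalCAT (μp : Measure Ωp) (μd : Measure Ωd) (asv : Bool)
    (H : ℕ → Ωp × Ωd → BoundedContinuousFunction ι ℝ) : Prop :=
  ∀ (f : ι) (η : ℝ), 0 < η → ∃ Mb : ℝ, 0 < Mb ∧
    ∃ B : ℕ → Ωp × Ωd → ℝ, (∀ N, Measurable (B N)) ∧ ConvZero (μp.prod μd) asv B ∧
      ∀ N ω, 1 - η ≤ (μd {ωd | |H N (ω.1, ωd) f| ≤ Mb}).toReal + B N ω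

/-- Conditional asymptotic `ρ`-equicontinuity. -/
def CondAEC (μp : Measure Ωp) (μd : Measure Ωd) (asv : Bool) (ρ : ι → ι → ℝ)
    (H : ℕ → Ωp × Ωd → BoundedContinuousFunction ι ℝ) : Prop :=
  ∀ ε η : ℝ, 0 < ε → 0 < η → ∃ δ : ℝ, 0 < δ ∧
    ∃ C : ℕ → Ωp × Ωd → ℝ, (∀ N, Measurable (C N)) ∧ ConvZero (μp.prod μd) asv C ∧
      ∀ N ω, (μd {ωd | ε < sSup {r : ℝ | ∃ f g : ι, ρ f g < δ ∧
          r = |H N (ω.1, ωd) f - H N (ω.1, ωd) g|}}).toReal < η + C N ω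

/-- The conditional finite approximation property. -/
def CondFinApprox (μp : Measure Ωp) (μd : Measure Ωd) (asv : Bool)
    (H : ℕ → Ωp × Ωd → BoundedContinuousFunction ι ℝ) : Prop :=
  ∀ ε η : ℝ, 0 < ε → 0 < η → ∃ (k : ℕ) (Fi : Fin k → Set ι),
    (∀ f : ι, ∃ i, f ∈ Fi i) ∧ (∀ i j, i ≠ j → Disjoint (Fi i) (Fi j)) ∧
    ∃ D : ℕ → Ωp × Ωd → ℝ, (∀ N, Measurable (D N)) ∧ ConvZero (μp.prod μd) asv D ∧
      ∀ N ω, (μd {ωd | ε < sSup {r : ℝ | ∃ (i : Fin k) (f g : ι), f ∈ Fi i ∧ g ∈ Fi i ∧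
          r = |H N (ω.1, ωd) f - H N (ω.1, ωd) g|}}).toReal < η + D N ω

/-- Conditional weak convergence of the finite-dimensional marginals (CWCM). -/
def CWCM (μp : Measure Ωp) (μd : Measure Ωd) (μ' : Measure Ω') (asv : Bool)
    (H : ℕ → Ωp × Ωd → ι → ℝ) (H' : Ω' → ι → ℝ) : Prop :=
  ∀ (r : ℕ) (fv : Fin r → ι) (t : Fin r → ℝ),
    ConvZero (μp.prod μd) asv fun N ω =>
      ‖(∫ ωd, Complex.exp (Complex.I * ∑ j, (t j : ℂ) * (H N (ω.1, ωd) (fv j) : ℂ)) ∂μd) -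
        ∫ ω', Complex.exp (Complex.I * ∑ j, (t j : ℂ) * (H' ω' (fv j) : ℂ)) ∂μ'‖

end General


/-! ### Covering numbers, finitely discrete measures, uniform entropy -/

/-- `L₂(Q)`-covering number of a class of functions. -/
def covNum {α : Type*} [MeasurableSpace α] (ε : ℝ) (G : Set (α → ℝ)) (Q : Measure α) : ℝ≥0∞ :=
  ⨅ (T : Finset (α → ℝ)) (_ : ∀ f ∈ G, ∃ g ∈ T, ∫ x, (f x - g x) ^ 2 ∂Q ≤ ε ^ 2),
    (T.card : ℝ≥0∞)

/-- Finitely discrete measures. -/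
def FinDiscrete {α : Type*} [MeasurableSpace α] (Q : Measure α) : Prop :=
  ∃ (T : Finset α) (w : α → ℝ≥0∞), Q = ∑ t ∈ T, w t • Measure.dirac t

/-- `‖F‖_{L₂(Q)}`. -/
def L2norm {α : Type*} [MeasurableSpace α] (Q : Measure α) (F₀ : α → ℝ) : ℝ :=
  Real.sqrt (∫ x, F₀ x ^ 2 ∂Q)

/-- The set of values `√(log N(ε‖F‖_{L₂(Q)}, G, L₂(Q)))`, `Q` ranging over the
finitely discrete probability measures with `‖F‖_{L₂(Q)} > 0`. -/
def entropySet {α : Type*} [MeasurableSpace α] (G : Set (α → ℝ)) (F₀ : α → ℝ) (ε : ℝ) :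
    Set ℝ :=
  {r | ∃ Q : Measure α, IsProbabilityMeasure Q ∧ FinDiscrete Q ∧ 0 < L2norm Q F₀ ∧
    r = Real.sqrt (Real.log ((covNum (ε * L2norm Q F₀) G Q).toReal))}

/-- The uniform entropy condition
`∫₀^∞ sup_Q √(log N(ε‖F‖_{L₂(Q)}, G, L₂(Q))) dε < ∞`. -/
def UniformEntropy {α : Type*} [MeasurableSpace α] (G : Set (α → ℝ)) (F₀ : α → ℝ) : Prop :=
  (∀ ε : ℝ, 0 < ε → ∀ Q : Measure α, IsProbabilityMeasure Q → FinDiscrete Q →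
      0 < L2norm Q F₀ → covNum (ε * L2norm Q F₀) G Q ≠ ⊤) ∧
  (∀ ε : ℝ, 0 < ε → BddAbove (entropySet G F₀ ε)) ∧
  IntegrableOn (fun ε => sSup (entropySet G F₀ ε)) (Ioi 0) volume

/-- Pointwise measurable classes of functions (condition (PM)). -/
def PointwiseMeasClass {α : Type*} (𝓕 : Set (α → ℝ)) : Prop :=
  ∃ 𝓖 : Set (α → ℝ), 𝓖 ⊆ 𝓕 ∧ 𝓖.Countable ∧
    ∀ f ∈ 𝓕, ∃ g : ℕ → α → ℝ, (∀ m, g m ∈ 𝓖) ∧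
      ∀ y, Tendsto (fun m => g m y) atTop (nhds (f y))

/-- The `L₂(P_y)` semimetric `ρ`. -/
def rhoY {𝓨 : Type*} [MeasurableSpace 𝓨] (Py : Measure 𝓨) (f g : 𝓨 → ℝ) : ℝ :=
  Real.sqrt (∫ y, (f y - g y) ^ 2 ∂Py)

/-- Condition (M2): for every `δ > 0` the class `F_δ` is `P_y`-measurable. -/
def M2cond {𝓨 : Type*} [MeasurableSpace 𝓨] (Py : Measure 𝓨) (𝓕 : Set (𝓨 → ℝ)) : Prop :=
  ∀ δ : ℝ, 0 < δ → ∀ (N : ℕ) (e : Fin N → ℝ),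
    NullMeasurable (fun y : Fin N → 𝓨 =>
      sSup {r : ℝ | ∃ f ∈ 𝓕, ∃ g ∈ 𝓕, rhoY Py f g < δ ∧
        r = |∑ i, e i * (f (y i) - g (y i))|}) (Measure.pi fun _ : Fin N => Py)

/-- Condition (C1): `𝓕` contains a function which is `P_y`-a.s. equal to a
nonzero constant `C`. -/
def C1cond {𝓨 : Type*} [MeasurableSpace 𝓨] (Py : Measure 𝓨) (𝓕 : Set (𝓨 → ℝ))
    (f₀ : 𝓨 → ℝ) (C : ℝ) : Prop :=
  f₀ ∈ 𝓕 ∧ C ≠ 0 ∧ ∀ᵐ y ∂Py, f₀ y = C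

/-- The covariance function `Σ''` of the Hájek limit process. -/
def sigma2 {𝓨 : Type*} [MeasurableSpace 𝓨] (Py : Measure 𝓨)
    (Sig : (𝓨 → ℝ) → (𝓨 → ℝ) → ℝ) (f₀ : 𝓨 → ℝ) (C : ℝ) (f g : 𝓨 → ℝ) : ℝ :=
  Sig f g - (∫ y, f y ∂Py) / C * Sig f₀ g - (∫ y, g y ∂Py) / C * Sig f f₀ +
    (∫ y, f y ∂Py) * (∫ y, g y ∂Py) / C ^ 2 * Sig f₀ f₀

/-! ### Laws on `ℓ^∞(𝓕)` (realized as bounded continuous functions on the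
discrete index set) -/

/-- `ν` is the law of a zero-mean Gaussian process with covariance function
`Sig` (via characteristic functions of the finite-dimensional marginals). -/
def GaussianLaw {ι : Type*} [TopologicalSpace ι]
    [MeasurableSpace (BoundedContinuousFunction ι ℝ)]
    (ν : Measure (BoundedContinuousFunction ι ℝ)) (Sig : ι → ι → ℝ) : Prop :=
  ∀ (r : ℕ) (fv : Fin r → ι) (t : Fin r → ℝ),
    (∫ z, Complex.exp (Complex.I * ∑ j, (t j : ℂ) * (z (fv j) : ℂ)) ∂ν) =
      Complex.exp (-(1 / 2 : ℂ) * ∑ j, ∑ k, (t j : ℂ) * (t k : ℂ) * (Sig (fv j) (fv k) : ℂ))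

/-- Tightness of a law. -/
def TightLaw {E : Type*} [TopologicalSpace E] [MeasurableSpace E] (ν : Measure E) : Prop :=
  ∀ η : ℝ, 0 < η → ∃ K : Set E, IsCompact K ∧ 1 - η ≤ (ν K).toReal

/-- The set of sample paths which are uniformly `ρ`-continuous. -/
def UCpaths {ι : Type*} [TopologicalSpace ι] (ρ : ι → ι → ℝ) :
    Set (BoundedContinuousFunction ι ℝ) :=
  {z | ∀ ε : ℝ, 0 < ε → ∃ δ : ℝ, 0 < δ ∧ ∀ f g : ι, ρ f g < δ → |z f - z g| ≤ ε}

/-- Unconditional weak convergence `path_N ⇝ ν` in `ℓ^∞(ι)`: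
`E* h(path_N) → ∫ h dν` for every bounded sup-continuous `h`. -/
def WeakConvL {Ω ι : Type*} [MeasurableSpace Ω] [TopologicalSpace ι]
    [MeasurableSpace (BoundedContinuousFunction ι ℝ)]
    (μ : Measure Ω) (path : ℕ → Ω → ι → ℝ)
    (ν : Measure (BoundedContinuousFunction ι ℝ)) : Prop :=
  ∀ h : (ι → ℝ) → ℝ, SupContinuous h → (∃ Mb : ℝ, ∀ z, |h z| ≤ Mb) →
    Tendsto (fun N => outerExp μ fun ω => h (path N ω)) atTop
      (nhds (∫ z, h (fun f => z f) ∂ν))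

/-! ### Conditional Poisson (rejective) sampling -/

/-- Poisson weight of the sample `A` for parameter `p`. -/
def poissonWt {N : ℕ} (p : Fin N → ℝ) (A : Finset (Fin N)) : ℝ :=
  (∏ i ∈ A, p i) * ∏ i ∈ Aᶜ, (1 - p i)

/-- The pmf of the conditional Poisson (rejective) sampling design of size `n`
with Poisson parameter `p`. -/
def cpsPmf (N n : ℕ) (p : Fin N → ℝ) (A : Finset (Fin N)) : ℝ :=
  if A.card = n then
    poissonWt p A /
      ∑ B ∈ Finset.univ.filter (fun B : Finset (Fin N) => B.card = n), poissonWt p B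
  else 0

/-- First order sample inclusion probabilities of a CPS design. -/
def cpsIncl (N n : ℕ) (p : Fin N → ℝ) (i : Fin N) : ℝ :=
  ∑ A ∈ Finset.univ.filter (fun A : Finset (Fin N) => i ∈ A), cpsPmf N n p A

variable {𝓨 𝓧 Ωd : Type*} [MeasurableSpace 𝓨] [MeasurableSpace 𝓧] [MeasurableSpace Ωd]

/-- The study variable `Y_i` (coordinate projection). -/
def Yc (ω₁ : ℕ → 𝓨 × 𝓧) {N : ℕ} (i : Fin N) : 𝓨 := (ω₁ i.val).1

/-- The auxiliary variables `X_N = (X₁, …, X_N)`. -/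
def Xv (N : ℕ) (ω₁ : ℕ → 𝓨 × 𝓧) : Fin N → 𝓧 := fun i => (ω₁ i.val).2

/-- The probabilistic set-up of the paper: i.i.d. population values given by
coordinate projections, together with a sequence of measurable conditional
Poisson sampling designs with canonical Poisson parameters `p N` and sample
sizes `nN N`, realized through the design coordinate `Ωd`. -/
structure CPSModel (𝓨 𝓧 Ωd : Type*) [MeasurableSpace 𝓨] [MeasurableSpace 𝓧]
    [MeasurableSpace Ωd] where
  μyx : Measure (𝓨 × 𝓧)
  μp : Measure (ℕ → 𝓨 × 𝓧)
  μd : Measure Ωd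
  prob_yx : IsProbabilityMeasure μyx
  prob_p : IsProbabilityMeasure μp
  prob_d : IsProbabilityMeasure μd
  iid : ∀ N : ℕ, μp.map (fun ω (i : Fin N) => ω i.val) = Measure.pi fun _ : Fin N => μyx
  nN : (N : ℕ) → (Fin N → 𝓧) → ℕ
  p : (N : ℕ) → (Fin N → 𝓧) → Fin N → ℝ
  p_mem : ∀ N x i, p N x i ∈ Set.Ioo (0:ℝ) 1
  p_canon : ∀ N x, ∑ i, p N x i = (nN N x : ℝ)
  p_meas : ∀ N, Measurable (p N)
  n_meas : ∀ N, Measurable (nN N)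
  S : (N : ℕ) → (Fin N → 𝓧) → Ωd → Finset (Fin N)
  S_meas : ∀ (N : ℕ) (A : Finset (Fin N)),
    MeasurableSet {q : (Fin N → 𝓧) × Ωd | S N q.1 q.2 = A}
  S_law : ∀ (N : ℕ) (x : Fin N → 𝓧) (A : Finset (Fin N)),
    μd {ωd | S N x ωd = A} = ENNReal.ofReal (cpsPmf N (nN N x) (p N x) A)

namespace CPSModel

variable (M : CPSModel 𝓨 𝓧 Ωd)

/-- The underlying product probability measure. -/
def P : Measure ((ℕ → 𝓨 × 𝓧) × Ωd) := M.μp.prod M.μd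

/-- The law `P_y` of `Y₁`. -/
def Py : Measure 𝓨 := M.μyx.map Prod.fst

/-- The law `P_x` of `X₁`. -/
def Px : Measure 𝓧 := M.μyx.map Prod.snd

/-- First order sample inclusion probabilities `π_{i,N}` of the CPS design. -/
def piIncl (N : ℕ) (ω₁ : ℕ → 𝓨 × 𝓧) (i : Fin N) : ℝ :=
  cpsIncl N (M.nN N (Xv N ω₁)) (M.p N (Xv N ω₁)) i

/-- The Horvitz–Thompson empirical process evaluated at the sample `A`. -/
def HTw (N : ℕ) (ω₁ : ℕ → 𝓨 × 𝓧) (A : Finset (Fin N)) (f : 𝓨 → ℝ) : ℝ :=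
  (Real.sqrt (N : ℝ))⁻¹ *
    ∑ i : Fin N, ((if i ∈ A then (M.piIncl N ω₁ i)⁻¹ else 0) - 1) * f (Yc ω₁ i)

/-- The Horvitz–Thompson empirical process `𝔾_N'`. -/
def HT (N : ℕ) (ω : (ℕ → 𝓨 × 𝓧) × Ωd) (f : 𝓨 → ℝ) : ℝ :=
  M.HTw N ω.1 (M.S N (Xv N ω.1) ω.2) f

/-- The design expectation `E_d`. -/
def Ed (N : ℕ) (ω₁ : ℕ → 𝓨 × 𝓧) (g : Finset (Fin N) → ℝ) : ℝ :=
  ∑ A : Finset (Fin N), g A * cpsPmf N (M.nN N (Xv N ω₁)) (M.p N (Xv N ω₁)) A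

/-- The design expectation `E_d` of a complex-valued function. -/
def EdC (N : ℕ) (ω₁ : ℕ → 𝓨 × 𝓧) (g : Finset (Fin N) → ℂ) : ℂ :=
  ∑ A : Finset (Fin N), g A * (cpsPmf N (M.nN N (Xv N ω₁)) (M.p N (Xv N ω₁)) A : ℂ)

/-- `d_N := ∑ p_{i,N}(1 - p_{i,N})`. -/
def dN (N : ℕ) (ω₁ : ℕ → 𝓨 × 𝓧) : ℝ :=
  ∑ i : Fin N, M.p N (Xv N ω₁) i * (1 - M.p N (Xv N ω₁) i)

/-- `R_N(f)`. -/
def RN (N : ℕ) (ω₁ : ℕ → 𝓨 × 𝓧) (f : 𝓨 → ℝ) : ℝ :=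
  if 0 < M.dN N ω₁ then
    (M.dN N ω₁)⁻¹ * ∑ i : Fin N, f (Yc ω₁ i) * (1 - M.p N (Xv N ω₁) i)
  else 0

/-- Condition (A0). -/
def A0 (asv : Bool) : Prop := ConvTop M.P asv fun N ω => M.dN N ω.1

/-- Condition (A1) with covariance function `Sig`. -/
def A1 (𝓕 : Set (𝓨 → ℝ)) (asv : Bool) (Sig : (𝓨 → ℝ) → (𝓨 → ℝ) → ℝ) : Prop :=
  ∀ f ∈ 𝓕, ∀ g ∈ 𝓕, ConvZero M.P asv fun N ω =>
    (N : ℝ)⁻¹ * (∑ i : Fin N,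
      ((1 - M.p N (Xv N ω.1) i) / M.p N (Xv N ω.1) i) *
        (f (Yc ω.1 i) - M.RN N ω.1 f * M.p N (Xv N ω.1) i) *
        (g (Yc ω.1 i) - M.RN N ω.1 g * M.p N (Xv N ω.1) i)) - Sig f g

/-- Condition (A2) (multivariate Lindeberg condition). -/
def A2 (𝓕 : Set (𝓨 → ℝ)) (asv : Bool) : Prop :=
  ∀ (r : ℕ) (fv : Fin r → 𝓨 → ℝ), (∀ j, fv j ∈ 𝓕) → ∀ ε : ℝ, 0 < ε →
    ConvZero M.P asv fun N ω =>
      (N : ℝ)⁻¹ * ∑ i : Fin N,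
        if M.p N (Xv N ω.1) i * Real.sqrt (N : ℝ) * ε <
            Real.sqrt (∑ j, (fv j (Yc ω.1 i) - M.RN N ω.1 (fv j) * M.p N (Xv N ω.1) i) ^ 2) then
          (∑ j, (fv j (Yc ω.1 i) - M.RN N ω.1 (fv j) * M.p N (Xv N ω.1) i) ^ 2) /
            M.p N (Xv N ω.1) i
        else 0

/-- Condition (A2*): the canonical Poisson inclusion probabilities are bounded
away from zero with probability tending to one (resp. eventually a.s.). -/
def A2star (asv : Bool) : Prop :=
  ∃ L : ℝ, 0 < L ∧ EventuallyHolds M.P asv fun N ω => ∀ i : Fin N, L < M.p N (Xv N ω.1) i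

/-- Condition (GC): `(𝓕_∞)²` is an outer almost sure `P_y`-Glivenko–Cantelli
class. -/
def GC (𝓕 : Set (𝓨 → ℝ)) : Prop :=
  ∃ Δ : ℕ → (ℕ → 𝓨 × 𝓧) → ℝ, (∀ N, Measurable (Δ N)) ∧
    (∀ (N : ℕ) (ω₁ : ℕ → 𝓨 × 𝓧),
      sSup {r : ℝ | ∃ f ∈ 𝓕, ∃ g ∈ 𝓕,
        r = |(N : ℝ)⁻¹ * ∑ i : Fin N, (f (Yc ω₁ i) - g (Yc ω₁ i)) ^ 2 -
              ∫ y, (f y - g y) ^ 2 ∂M.Py|} ≤ Δ N ω₁) ∧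
    ∀ᵐ ω₁ ∂M.μp, Tendsto (fun N => Δ N ω₁) atTop (nhds 0)

/-- Condition (F1): envelope with finite outer second moment and the uniform
entropy condition. -/
def F1 (𝓕 : Set (𝓨 → ℝ)) (F₀ : 𝓨 → ℝ) : Prop :=
  (∀ f ∈ 𝓕, ∀ y, |f y| ≤ F₀ y) ∧
  (∃ G : 𝓨 → ℝ, Measurable G ∧ (∀ y, F₀ y ^ 2 ≤ G y) ∧ Integrable G M.Py) ∧
  UniformEntropy 𝓕 F₀

/-- `sup_{h ∈ F_δ} |𝔾_N' h|` over `F_δ = {f - g : ρ'(f,g) < δ}`, at sample `A`. -/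
def supHT (ρ' : (𝓨 → ℝ) → (𝓨 → ℝ) → ℝ) (𝓕 : Set (𝓨 → ℝ)) (δ : ℝ)
    (N : ℕ) (ω₁ : ℕ → 𝓨 × 𝓧) (A : Finset (Fin N)) : ℝ :=
  sSup {r : ℝ | ∃ f ∈ 𝓕, ∃ g ∈ 𝓕, ρ' f g < δ ∧ r = |M.HTw N ω₁ A fun y => f y - g y|}

/-- The auxiliary Hájek process `𝔾̃_N''` evaluated at the sample `A`. -/
def HajekAuxW (N : ℕ) (ω₁ : ℕ → 𝓨 × 𝓧) (A : Finset (Fin N)) (f : 𝓨 → ℝ) : ℝ :=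
  (Real.sqrt (N : ℝ))⁻¹ *
    ∑ i : Fin N, ((if i ∈ A then (M.piIncl N ω₁ i)⁻¹ else 0) - 1) *
      (f (Yc ω₁ i) - (N : ℝ)⁻¹ * ∑ j : Fin N, f (Yc ω₁ j))

/-- `sup_{h ∈ F_δ} |𝔾̃_N'' h|` at sample `A`. -/
def supHajek (ρ' : (𝓨 → ℝ) → (𝓨 → ℝ) → ℝ) (𝓕 : Set (𝓨 → ℝ)) (δ : ℝ)
    (N : ℕ) (ω₁ : ℕ → 𝓨 × 𝓧) (A : Finset (Fin N)) : ℝ :=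
  sSup {r : ℝ | ∃ f ∈ 𝓕, ∃ g ∈ 𝓕, ρ' f g < δ ∧ r = |M.HajekAuxW N ω₁ A fun y => f y - g y|}

/-- The Hájek empirical process `𝔾_N''` evaluated at the sample `A`. -/
def HajekW (N : ℕ) (ω₁ : ℕ → 𝓨 × 𝓧) (A : Finset (Fin N)) (f : 𝓨 → ℝ) : ℝ :=
  Real.sqrt (N : ℝ) *
    ((∑ i : Fin N, if i ∈ A then (M.piIncl N ω₁ i)⁻¹ else 0)⁻¹ *
        (∑ i : Fin N, (if i ∈ A then (M.piIncl N ω₁ i)⁻¹ else 0) * f (Yc ω₁ i)) -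
      (N : ℝ)⁻¹ * ∑ i : Fin N, f (Yc ω₁ i))

/-- The classical `𝓕`-indexed empirical process `𝔾_N`. -/
def EmpProc (N : ℕ) (ω₁ : ℕ → 𝓨 × 𝓧) (f : 𝓨 → ℝ) : ℝ :=
  (Real.sqrt (N : ℝ))⁻¹ * ∑ i : Fin N, (f (Yc ω₁ i) - ∫ y, f y ∂M.Py)

/-- The size-variable design: first order CPS inclusion probabilities are
proportional to a size variable `w`, truncated at 1. -/
def SizeDesign (w : 𝓧 → ℝ) : Prop :=
  ∃ c : (N : ℕ) → (Fin N → 𝓧) → ℝ, (∀ N x, 0 < c N x) ∧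
    ∀ (N : ℕ) (x : Fin N → 𝓧) (i : Fin N),
      cpsIncl N (M.nN N x) (M.p N x) i = min (c N x * w (x i) / ∑ j, w (x j)) 1

/-- Condition (B0). -/
def B0 (asv : Bool) (a : ℝ) : Prop :=
  a ∈ Set.Ioo (0:ℝ) 1 ∧ ConvZero M.P asv fun N ω => (M.nN N (Xv N ω.1) : ℝ) / (N : ℝ) - a

end CPSModel

/-- Condition (B1). -/
def B1cond {𝓧 : Type*} [MeasurableSpace 𝓧] (Px : Measure 𝓧) (w : 𝓧 → ℝ) : Prop :=
  Measurable w ∧ (∀ x, 0 < w x) ∧ Integrable w Px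

/-- `w_θ`. -/
def wtheta {𝓧 : Type*} [MeasurableSpace 𝓧] (Px : Measure 𝓧) (w : 𝓧 → ℝ) (θ : ℝ)
    (x : 𝓧) : ℝ :=
  min (w x) ((∫ x', w x' ∂Px) / θ)

/-- `θ` is the constant with `E min{θ w(X₁)/E w(X₂), 1} = α`. -/
def thetaSpec {𝓧 : Type*} [MeasurableSpace 𝓧] (Px : Measure 𝓧) (w : 𝓧 → ℝ)
    (θ a : ℝ) : Prop :=
  0 < θ ∧ (∫ x, min (θ * w x / ∫ x', w x' ∂Px) 1 ∂Px) = a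

namespace CPSModel

variable {𝓨 𝓧 Ωd : Type*} [MeasurableSpace 𝓨] [MeasurableSpace 𝓧] [MeasurableSpace Ωd]
variable (M : CPSModel 𝓨 𝓧 Ωd)

/-- The semimetric `ρ_w`. -/
def rhoW (w : 𝓧 → ℝ) (θ : ℝ) (f g : 𝓨 → ℝ) : ℝ :=
  Real.sqrt (∫ q : 𝓨 × 𝓧, ((f q.1 - g q.1) / wtheta M.Px w θ q.2) ^ 2 ∂M.μyx)

/-- Condition (B2). -/
def B2 (𝓕 : Set (𝓨 → ℝ)) (w : 𝓧 → ℝ) (θ : ℝ) : Prop :=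
  ∀ f ∈ 𝓕, Integrable (fun q : 𝓨 × 𝓧 => (f q.1 / wtheta M.Px w θ q.2) ^ 2) M.μyx

/-- Condition (GC*). -/
def GCstar (𝓕 : Set (𝓨 → ℝ)) (w : 𝓧 → ℝ) (θ : ℝ) : Prop :=
  ∃ Δ : ℕ → (ℕ → 𝓨 × 𝓧) → ℝ, (∀ N, Measurable (Δ N)) ∧
    (∀ (N : ℕ) (ω₁ : ℕ → 𝓨 × 𝓧),
      sSup {r : ℝ | ∃ f ∈ 𝓕, ∃ g ∈ 𝓕,
        r = |(N : ℝ)⁻¹ * ∑ i : Fin N,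
                ((f (Yc ω₁ i) - g (Yc ω₁ i)) / wtheta M.Px w θ ((ω₁ i.val).2)) ^ 2 -
              ∫ q : 𝓨 × 𝓧, ((f q.1 - g q.1) / wtheta M.Px w θ q.2) ^ 2 ∂M.μyx|} ≤ Δ N ω₁) ∧
    ∀ᵐ ω₁ ∂M.μp, Tendsto (fun N => Δ N ω₁) atTop (nhds 0)

/-- Condition (F1*). -/
def F1star (𝓕 : Set (𝓨 → ℝ)) (F₀ : 𝓨 → ℝ) (w : 𝓧 → ℝ) (θ : ℝ) : Prop :=
  (∀ f ∈ 𝓕, ∀ y, |f y| ≤ F₀ y) ∧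
  (∃ G : 𝓨 × 𝓧 → ℝ, Measurable G ∧ (∀ q, (F₀ q.1 / wtheta M.Px w θ q.2) ^ 2 ≤ G q) ∧
    Integrable G M.μyx) ∧
  UniformEntropy ((fun (f : 𝓨 → ℝ) (q : 𝓨 × 𝓧) => f q.1 / wtheta M.Px w θ q.2) '' 𝓕)
    (fun q => F₀ q.1 / wtheta M.Px w θ q.2)

/-- The constant `R(f)` of the size-variable design. -/
def sizeR (w : 𝓧 → ℝ) (θ : ℝ) (f : 𝓨 → ℝ) : ℝ :=
  (∫ q : 𝓨 × 𝓧, f q.1 * (1 - θ * wtheta M.Px w θ q.2 / ∫ x, w x ∂M.Px) ∂M.μyx) /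
    ∫ x, (θ * wtheta M.Px w θ x / ∫ x', w x' ∂M.Px) *
      (1 - θ * wtheta M.Px w θ x / ∫ x', w x' ∂M.Px) ∂M.Px

/-- The covariance function `Σ'` of the size-variable design. -/
def sizeSigma (w : 𝓧 → ℝ) (θ : ℝ) (f g : 𝓨 → ℝ) : ℝ :=
  ∫ q : 𝓨 × 𝓧,
    (((∫ x, w x ∂M.Px) - θ * wtheta M.Px w θ q.2) / (θ * wtheta M.Px w θ q.2)) *
      (f q.1 - M.sizeR w θ f * (θ * wtheta M.Px w θ q.2) / ∫ x, w x ∂M.Px) *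
      (g q.1 - M.sizeR w θ g * (θ * wtheta M.Px w θ q.2) / ∫ x, w x ∂M.Px) ∂M.μyx

end CPSModel

/-- The `BL₁` distance between the conditional law of a design process (whose
value at the sample `A` is given by `path`) and a limit law `ν` on `ℓ^∞(𝓕)`. -/
def condBLdist {𝓨 𝓧 Ωd : Type*} [MeasurableSpace 𝓨] [MeasurableSpace 𝓧] [MeasurableSpace Ωd]
    (M : CPSModel 𝓨 𝓧 Ωd) (𝓕 : Set (𝓨 → ℝ)) [TopologicalSpace ↥𝓕]
    [MeasurableSpace (BoundedContinuousFunction ↥𝓕 ℝ)]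
    (path : (N : ℕ) → (ℕ → 𝓨 × 𝓧) → Finset (Fin N) → (𝓨 → ℝ) → ℝ)
    (ν : Measure (BoundedContinuousFunction ↥𝓕 ℝ))
    (N : ℕ) (ω : (ℕ → 𝓨 × 𝓧) × Ωd) : ℝ :=
  sSup {r : ℝ | ∃ h ∈ BL1' ↥𝓕,
    r = |M.Ed N ω.1 (fun A => h fun f : ↥𝓕 => path N ω.1 A ↑f) -
          ∫ z, h (fun f => z f) ∂ν|}


lemma convZero_zero {Ω : Type*} [MeasurableSpace Ω] (μ : Measure Ω) (asv : Bool) :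
    ConvZero μ asv (fun _ _ => (0:ℝ)) := by
  cases asv
  · simp only [ConvZero, Bool.false_eq_true, if_false]
    intro ε hε
    have h : {ω : Ω | ε < |(0:ℝ)|} = (∅ : Set Ω) := by
      ext ω; simp; linarith
    show Tendsto (fun N : ℕ => μ {ω : Ω | ε < |(0:ℝ)|}) atTop (nhds 0)
    rw [h]
    simpa using (tendsto_const_nhds : Tendsto (fun _ : ℕ => (0:ℝ≥0∞)) atTop (nhds 0))
  · simp only [ConvZero, if_true]
    exact Filter.Eventually.of_forall fun ω => tendsto_const_nhds

theorem statement1 {Ωp Ωd Ω' ι : Type*} [MeasurableSpace Ωp] [MeasurableSpace Ωd]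
    [MeasurableSpace Ω'] [TopologicalSpace ι] [DiscreteTopology ι]
    [MeasurableSpace (BoundedContinuousFunction ι ℝ)]
    [BorelSpace (BoundedContinuousFunction ι ℝ)]
    (μp : Measure Ωp) (μd : Measure Ωd) (μ' : Measure Ω')
    [IsProbabilityMeasure μp] [IsProbabilityMeasure μd] [IsProbabilityMeasure μ']
    (H : ℕ → Ωp × Ωd → BoundedContinuousFunction ι ℝ)
    (hmeas : ∀ (N : ℕ) (f : ι), Measurable fun ω => H N ω f)
    (H' : Ω' → BoundedContinuousFunction ι ℝ) (hH' : Measurable H')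
    (htight : ∀ η : ℝ, 0 < η → ∃ K : Set (BoundedContinuousFunction ι ℝ),
      IsCompact K ∧ 1 - η ≤ (μ' (H' ⁻¹' K)).toReal)
    (asv : Bool)
    (hconv : OuterConvZero (μp.prod μd) asv fun N ω =>
      sSup {r : ℝ | ∃ h ∈ BL1 (BoundedContinuousFunction ι ℝ),
        r = |(∫ ωd, h (H N (ω.1, ωd)) ∂μd) - ∫ ω', h (H' ω') ∂μ'|}) :
    CAT μp μd asv H := by
  classical
  intro η hη
  obtain ⟨K, hKc, hKm⟩ := htight (η / 2) (by linarith)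
  refine ⟨K, hKc, ?_⟩
  intro δ hδ
  by_cases hη1 : (1:ℝ) ≤ η
  · refine ⟨fun _ _ => 0, fun _ => measurable_const, convZero_zero _ _, ?_⟩
    intro N ω
    have h0 : (0:ℝ) ≤ (μd {ωd | H N (ω.1, ωd) ∈ thickening δ K}).toReal :=
      ENNReal.toReal_nonneg
    show 1 - η ≤ (μd {ωd | H N (ω.1, ωd) ∈ thickening δ K}).toReal + 0
    linarith
  push_neg at hη1
  -- K is nonempty
  have hKne : K.Nonempty := by
    by_contra hne
    rw [Set.not_nonempty_iff_eq_empty] at hne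
    subst hne
    simp only [Set.preimage_empty, measure_empty, ENNReal.toReal_zero] at hKm
    linarith
  set δ₀ : ℝ := min δ 1 with hδ₀def
  have hδ₀pos : 0 < δ₀ := lt_min hδ one_pos
  have hδ₀le1 : δ₀ ≤ 1 := min_le_right δ 1
  have hδ₀leδ : δ₀ ≤ δ := min_le_left δ 1
  -- the BL₁ test function
  set hfun : BoundedContinuousFunction ι ℝ → ℝ :=
    fun z => max 0 (δ₀ - Metric.infDist z K) with hfdef
  have hf_nonneg : ∀ z, 0 ≤ hfun z := fun z => le_max_left _ _
  have hf_le : ∀ z, hfun z ≤ δ₀ := by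
    intro z
    have h0 : 0 ≤ Metric.infDist z K := Metric.infDist_nonneg
    exact max_le hδ₀pos.le (by linarith)
  have hfmem : hfun ∈ BL1 (BoundedContinuousFunction ι ℝ) := by
    refine ⟨fun z => ⟨hf_nonneg z, le_trans (hf_le z) hδ₀le1⟩, ?_⟩
    intro z₁ z₂
    have h1 : Metric.infDist z₁ K ≤ Metric.infDist z₂ K + dist z₁ z₂ :=
      Metric.infDist_le_infDist_add_dist
    have h2 : Metric.infDist z₂ K ≤ Metric.infDist z₁ K + dist z₂ z₁ :=
      Metric.infDist_le_infDist_add_dist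
    rw [dist_comm] at h2
    have habs : |(δ₀ - Metric.infDist z₁ K) - (δ₀ - Metric.infDist z₂ K)| ≤ dist z₁ z₂ := by
      rw [abs_le]
      constructor <;> linarith
    have hmax := abs_max_sub_max_le_abs (δ₀ - Metric.infDist z₁ K)
      (δ₀ - Metric.infDist z₂ K) 0
    simp only [hfdef]
    rw [max_comm (0:ℝ), max_comm (0:ℝ)]
    exact hmax.trans habs
  have hfcont : Continuous hfun :=
    continuous_const.max (continuous_const.sub (Metric.continuous_infDist_pt K))
  -- lower bound for the limit integral
  have hJ : δ₀ * (1 - η / 2) ≤ ∫ ω', hfun (H' ω') ∂μ' := by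
    have hmK : MeasurableSet (H' ⁻¹' K) := hH' hKc.isClosed.measurableSet
    have hind : Integrable ((H' ⁻¹' K).indicator fun _ => δ₀) μ' :=
      (integrable_const δ₀).indicator hmK
    have hm : Measurable fun ω' => hfun (H' ω') := hfcont.measurable.comp hH'
    have hintf : Integrable (fun ω' => hfun (H' ω')) μ' := by
      refine ⟨hm.aestronglyMeasurable, ?_⟩
      refine MeasureTheory.HasFiniteIntegral.of_bounded (C := δ₀) ?_
      exact Filter.Eventually.of_forall fun ω' => by
        rw [Real.norm_eq_abs, abs_of_nonneg (hf_nonneg _)]; exact hf_le _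
    have hle : ∀ ω', (H' ⁻¹' K).indicator (fun _ => δ₀) ω' ≤ hfun (H' ω') := by
      intro ω'
      by_cases hω : ω' ∈ H' ⁻¹' K
      · rw [Set.indicator_of_mem hω]
        have h0 : Metric.infDist (H' ω') K = 0 := Metric.infDist_zero_of_mem hω
        simp only [hfdef, h0, sub_zero]
        exact le_max_right _ _
      · rw [Set.indicator_of_notMem hω]; exact hf_nonneg _
    calc δ₀ * (1 - η / 2) ≤ δ₀ * (μ' (H' ⁻¹' K)).toReal :=
          mul_le_mul_of_nonneg_left hKm hδ₀pos.le
      _ = (μ' (H' ⁻¹' K)).toReal • δ₀ := by rw [smul_eq_mul]; ring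
      _ = ∫ ω', (H' ⁻¹' K).indicator (fun _ => δ₀) ω' ∂μ' := by
          rw [MeasureTheory.integral_indicator_const _ hmK]; rfl
      _ ≤ _ := integral_mono hind hintf hle
  -- properties of Z
  set Z : ℕ → Ωp × Ωd → ℝ := fun N ω =>
    sSup {r : ℝ | ∃ h ∈ BL1 (BoundedContinuousFunction ι ℝ),
      r = |(∫ ωd, h (H N (ω.1, ωd)) ∂μd) - ∫ ω', h (H' ω') ∂μ'|} with hZdef
  have hZbdd : ∀ (N : ℕ) (ω : Ωp × Ωd), BddAbove {r : ℝ | ∃ h ∈ BL1 (BoundedContinuousFunction ι ℝ),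
      r = |(∫ ωd, h (H N (ω.1, ωd)) ∂μd) - ∫ ω', h (H' ω') ∂μ'|} := by
    intro N ω
    refine ⟨2, ?_⟩
    rintro r ⟨h, hh, rfl⟩
    have hb1 : |∫ ωd, h (H N (ω.1, ωd)) ∂μd| ≤ 1 := by
      have := MeasureTheory.norm_integral_le_of_norm_le_const (μ := μd)
        (f := fun ωd => h (H N (ω.1, ωd))) (C := 1)
        (Filter.Eventually.of_forall fun a => by
          rw [Real.norm_eq_abs, abs_le]
          exact ⟨by linarith [(hh.1 (H N (ω.1, a))).1], (hh.1 (H N (ω.1, a))).2⟩)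
      simpa using this
    have hb2 : |∫ ω', h (H' ω') ∂μ'| ≤ 1 := by
      have := MeasureTheory.norm_integral_le_of_norm_le_const (μ := μ')
        (f := fun ω' => h (H' ω')) (C := 1)
        (Filter.Eventually.of_forall fun a => by
          rw [Real.norm_eq_abs, abs_le]
          exact ⟨by linarith [(hh.1 (H' a)).1], (hh.1 (H' a)).2⟩)
      simpa using this
    calc |(∫ ωd, h (H N (ω.1, ωd)) ∂μd) - ∫ ω', h (H' ω') ∂μ'|
        ≤ |∫ ωd, h (H N (ω.1, ωd)) ∂μd| + |∫ ω', h (H' ω') ∂μ'| := abs_sub _ _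
      _ ≤ 1 + 1 := add_le_add hb1 hb2
      _ = 2 := by norm_num
  have hZnonneg : ∀ N ω, 0 ≤ Z N ω := by
    intro N ω
    exact Real.sSup_nonneg (by rintro r ⟨h, hh, rfl⟩; exact abs_nonneg _)
  have hZge : ∀ (N : ℕ) (ω : Ωp × Ωd),
      |(∫ ωd, hfun (H N (ω.1, ωd)) ∂μd) - ∫ ω', hfun (H' ω') ∂μ'| ≤ Z N ω := by
    intro N ω
    exact le_csSup (hZbdd N ω) ⟨hfun, hfmem, rfl⟩
  -- the key pointwise inequality
  have hkey : ∀ (N : ℕ) (ω : Ωp × Ωd), 1 - η ≤ (μd {ωd | H N (ω.1, ωd) ∈ thickening δ K}).toReal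
      + min 1 (δ₀⁻¹ * Z N ω) := by
    intro N ω
    set S : Set Ωd := {ωd | H N (ω.1, ωd) ∈ thickening δ K} with hSdef
    have hSnn : (0:ℝ) ≤ (μd S).toReal := ENNReal.toReal_nonneg
    by_cases hint : Integrable (fun ωd => hfun (H N (ω.1, ωd))) μd
    · have hT : S ⊆ toMeasurable μd S := subset_toMeasurable _ _
      have hTm : MeasurableSet (toMeasurable μd S) := measurableSet_toMeasurable _ _
      have hptle : ∀ ωd, hfun (H N (ω.1, ωd))
          ≤ (toMeasurable μd S).indicator (fun _ => δ₀) ωd := by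
        intro ωd
        by_cases hωd : ωd ∈ toMeasurable μd S
        · rw [Set.indicator_of_mem hωd]; exact hf_le _
        · rw [Set.indicator_of_notMem hωd]
          have hnS : ωd ∉ S := fun hmem => hωd (hT hmem)
          have hdistge : δ ≤ Metric.infDist (H N (ω.1, ωd)) K := by
            by_contra hlt
            push_neg at hlt
            exact hnS ((Metric.mem_thickening_iff_infDist_lt hKne).mpr hlt)
          simp only [hfdef]
          exact max_le le_rfl (by linarith)
      have hIle : (∫ ωd, hfun (H N (ω.1, ωd)) ∂μd) ≤ δ₀ * (μd S).toReal := by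
        have hind : Integrable ((toMeasurable μd S).indicator fun _ => δ₀) μd :=
          (integrable_const δ₀).indicator hTm
        calc (∫ ωd, hfun (H N (ω.1, ωd)) ∂μd)
            ≤ ∫ ωd, (toMeasurable μd S).indicator (fun _ => δ₀) ωd ∂μd :=
              integral_mono hint hind hptle
          _ = (μd (toMeasurable μd S)).toReal • δ₀ :=
              MeasureTheory.integral_indicator_const _ hTm
          _ = δ₀ * (μd S).toReal := by
              rw [measure_toMeasurable, smul_eq_mul]; ring
      have hZlb : δ₀ * (1 - η/2 - (μd S).toReal) ≤ Z N ω := by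
        have h2 : (∫ ω', hfun (H' ω') ∂μ') - (∫ ωd, hfun (H N (ω.1, ωd)) ∂μd)
            ≤ |(∫ ωd, hfun (H N (ω.1, ωd)) ∂μd) - ∫ ω', hfun (H' ω') ∂μ'| := by
          rw [abs_sub_comm]; exact le_abs_self _
        have h3 := hZge N ω
        have h4 : δ₀ * (1 - η/2 - (μd S).toReal)
            = δ₀ * (1 - η/2) - δ₀ * (μd S).toReal := by ring
        linarith
      have hc : 1 - η/2 - (μd S).toReal ≤ δ₀⁻¹ * Z N ω := by
        rw [inv_mul_eq_div, le_div_iff₀ hδ₀pos]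
        calc (1 - η/2 - (μd S).toReal) * δ₀ = δ₀ * (1 - η/2 - (μd S).toReal) := by ring
          _ ≤ Z N ω := hZlb
      have hmin : 1 - η - (μd S).toReal ≤ min 1 (δ₀⁻¹ * Z N ω) :=
        le_min (by linarith) (by linarith)
      linarith
    · have hI0 : (∫ ωd, hfun (H N (ω.1, ωd)) ∂μd) = 0 :=
        MeasureTheory.integral_undef hint
      have hJnn : 0 ≤ ∫ ω', hfun (H' ω') ∂μ' :=
        le_trans (mul_nonneg hδ₀pos.le (by linarith)) hJ
      have hZlb : δ₀ * (1 - η/2) ≤ Z N ω := by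
        have h2 : δ₀ * (1 - η/2)
            ≤ |(∫ ωd, hfun (H N (ω.1, ωd)) ∂μd) - ∫ ω', hfun (H' ω') ∂μ'| := by
          rw [hI0, zero_sub, abs_neg, abs_of_nonneg hJnn]
          exact hJ
        exact h2.trans (hZge N ω)
      have hc : 1 - η/2 ≤ δ₀⁻¹ * Z N ω := by
        rw [inv_mul_eq_div, le_div_iff₀ hδ₀pos]
        calc (1 - η/2) * δ₀ = δ₀ * (1 - η/2) := by ring
          _ ≤ Z N ω := hZlb
      have hmin : 1 - η ≤ min 1 (δ₀⁻¹ * Z N ω) :=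
        le_min (by linarith) (by linarith)
      linarith
  -- now construct A according to the mode of convergence
  cases asv with
  | true =>
    simp only [OuterConvZero, if_true] at hconv
    obtain ⟨Δ, hΔm, hΔge, hΔ0⟩ := hconv
    refine ⟨fun N ω => min 1 (δ₀⁻¹ * Δ N ω),
      fun N => measurable_const.min ((hΔm N).const_mul _), ?_, ?_⟩
    · simp only [ConvZero, if_true]
      filter_upwards [hΔ0] with ω hω
      have ht : Tendsto (fun N => min 1 (δ₀⁻¹ * Δ N ω)) atTop
          (nhds (min 1 (δ₀⁻¹ * 0))) := tendsto_const_nhds.min (hω.const_mul _)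
      simpa using ht
    · intro N ω
      have h1 : min 1 (δ₀⁻¹ * Z N ω) ≤ min 1 (δ₀⁻¹ * Δ N ω) := by
        refine min_le_min le_rfl ?_
        exact mul_le_mul_of_nonneg_left ((le_abs_self _).trans (hΔge N ω))
          (inv_nonneg.mpr hδ₀pos.le)
      linarith [hkey N ω]
  | false =>
    simp only [OuterConvZero, Bool.false_eq_true, if_false] at hconv
    set W : ℕ → Ωp × Ωd → ℝ := fun N ω => min 1 (δ₀⁻¹ * Z N ω) with hWdef
    have hW0 : ∀ N ω, 0 ≤ W N ω := fun N ω =>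
      le_min zero_le_one (mul_nonneg (inv_nonneg.mpr hδ₀pos.le) (hZnonneg N ω))
    have hW1 : ∀ N ω, W N ω ≤ 1 := fun N ω => min_le_left _ _
    set E : ℕ → ℕ → Set (Ωp × Ωd) := fun N k =>
      toMeasurable (μp.prod μd) {ω | 1 / ((k:ℝ)+1) < W N ω} with hEdef
    have hEm : ∀ N k, MeasurableSet (E N k) := fun N k => measurableSet_toMeasurable _ _
    set A : ℕ → Ωp × Ωd → ℝ := fun N ω =>
      (⨅ k : ℕ, (ENNReal.ofReal (1 / ((k:ℝ)+1))
        + (E N k).indicator (fun _ => (1:ℝ≥0∞)) ω)).toReal with hAdef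
    have hfin : ∀ N ω, (⨅ k : ℕ, (ENNReal.ofReal (1 / ((k:ℝ)+1))
        + (E N k).indicator (fun _ => (1:ℝ≥0∞)) ω)) ≠ ⊤ := by
      intro N ω
      refine ne_of_lt (lt_of_le_of_lt (iInf_le _ 0) ?_)
      have hi : (E N 0).indicator (fun _ => (1:ℝ≥0∞)) ω ≤ 1 := by
        by_cases h : ω ∈ E N 0 <;> simp [h]
      calc ENNReal.ofReal (1 / (((0:ℕ):ℝ)+1)) + (E N 0).indicator (fun _ => (1:ℝ≥0∞)) ω
          ≤ ENNReal.ofReal (1 / (((0:ℕ):ℝ)+1)) + 1 := add_le_add le_rfl hi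
        _ < ⊤ := by
            refine ENNReal.add_lt_top.mpr ⟨ENNReal.ofReal_lt_top, ?_⟩
            exact ENNReal.one_lt_top
    have hAm : ∀ N, Measurable (A N) := by
      intro N
      apply ENNReal.measurable_toReal.comp
      apply Measurable.iInf
      intro k
      exact (measurable_const.indicator (hEm N k)).const_add _
    have hAnn : ∀ N ω, 0 ≤ A N ω := fun N ω => ENNReal.toReal_nonneg
    have hAW : ∀ N ω, W N ω ≤ A N ω := by
      intro N ω
      have hle : ENNReal.ofReal (W N ω) ≤ ⨅ k : ℕ, (ENNReal.ofReal (1 / ((k:ℝ)+1))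
          + (E N k).indicator (fun _ => (1:ℝ≥0∞)) ω) := by
        refine le_iInf fun k => ?_
        by_cases hmem : ω ∈ {ω | 1 / ((k:ℝ)+1) < W N ω}
        · have hE : ω ∈ E N k := subset_toMeasurable _ _ hmem
          rw [Set.indicator_of_mem hE]
          calc ENNReal.ofReal (W N ω) ≤ 1 := by
                rw [← ENNReal.ofReal_one]
                exact ENNReal.ofReal_le_ofReal (hW1 N ω)
            _ ≤ _ := le_add_self
        · have hle' : W N ω ≤ 1 / ((k:ℝ)+1) := not_lt.mp hmem
          exact le_trans (ENNReal.ofReal_le_ofReal hle') le_self_add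
      have := ENNReal.toReal_mono (hfin N ω) hle
      rwa [ENNReal.toReal_ofReal (hW0 N ω)] at this
    refine ⟨A, hAm, ?_, ?_⟩
    · simp only [ConvZero, Bool.false_eq_true, if_false]
      intro ε hε
      obtain ⟨k, hk⟩ := exists_nat_one_div_lt hε
      have hsub : ∀ N, {ω : Ωp × Ωd | ε < |A N ω|} ⊆ E N k := by
        intro N ω hω
        by_contra hnot
        have h1 : (⨅ j : ℕ, (ENNReal.ofReal (1 / ((j:ℝ)+1))
            + (E N j).indicator (fun _ => (1:ℝ≥0∞)) ω)) ≤ ENNReal.ofReal (1 / ((k:ℝ)+1)) := by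
          refine le_trans (iInf_le _ k) ?_
          rw [Set.indicator_of_notMem hnot, add_zero]
        have h2 : A N ω ≤ 1 / ((k:ℝ)+1) := by
          have := ENNReal.toReal_mono ENNReal.ofReal_ne_top h1
          rwa [ENNReal.toReal_ofReal (by positivity)] at this
        rw [Set.mem_setOf_eq, abs_of_nonneg (hAnn N ω)] at hω
        linarith
      have hsub2 : ∀ N, {ω : Ωp × Ωd | 1 / ((k:ℝ)+1) < W N ω}
          ⊆ {ω | δ₀ * (1 / ((k:ℝ)+1)) < |Z N ω|} := by
        intro N ω hω
        rw [Set.mem_setOf_eq] at hω ⊢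
        have h1 : 1 / ((k:ℝ)+1) < δ₀⁻¹ * Z N ω := lt_of_lt_of_le hω (min_le_right _ _)
        rw [abs_of_nonneg (hZnonneg N ω)]
        calc δ₀ * (1 / ((k:ℝ)+1)) < δ₀ * (δ₀⁻¹ * Z N ω) :=
              mul_lt_mul_of_pos_left h1 hδ₀pos
          _ = Z N ω := by
              rw [← mul_assoc, mul_inv_cancel₀ (ne_of_gt hδ₀pos), one_mul]
      have hεk : 0 < δ₀ * (1 / ((k:ℝ)+1)) := by positivity
      have hto := hconv _ hεk
      refine tendsto_of_tendsto_of_tendsto_of_le_of_le tendsto_const_nhds hto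
        (fun N => bot_le) (fun N => ?_)
      calc (μp.prod μd) {ω | ε < |A N ω|} ≤ (μp.prod μd) (E N k) :=
            measure_mono (hsub N)
        _ = (μp.prod μd) {ω | 1 / ((k:ℝ)+1) < W N ω} := measure_toMeasurable _
        _ ≤ (μp.prod μd) {ω | δ₀ * (1 / ((k:ℝ)+1)) < |Z N ω|} :=
            measure_mono (hsub2 N)
    · intro N ω
      linarith [hkey N ω, hAW N ω]

end Paper
end
end

section
/- Lemma (measurability equivalences for conditional Poisson sampling designs). Let p_N : 𝒳^N → (0,1)^N be the canonical Poisson parameter function of a CPS design of sample size n (so Σ_{i=1}^N p_{i,N}(X_N) = n for all X_N), let 𝔭_N^R(s; X_N) := 𝔭_N^R(s; p_N(X_N)) be the CPS sample selection probabilities, let 𝔭_N^P(s; X_N) := ∏_{i=1}^N p_{i,N}(X_N)^{s_i}(1−p_{i,N}(X_N))^{1−s_i} be the corresponding canonical Poisson sample selection probabilities, and let π_N(X_N) := (π_{1,N},…,π_{N,N}) with π_{i,N} := Σ_{s∈Ω_{N,n}: s_i=1} 𝔭_N^R(s; X_N) be the vector of first-order inclusion probabilities of the CPS design. Then the following are equivalent: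 (i) for every s ∈ {0,1}^N the map X_N ↦ 𝔭_N^R(s; X_N) is measurable from (𝒳,ℬ)^N into ℝ; (ii) X_N ↦ π_N(X_N) is measurable from (𝒳,ℬ)^N into ℝ^N; (iii) X_N ↦ p_N(X_N) is measurable from (𝒳,ℬ)^N into ℝ^N; (iv) for every s ∈ {0,1}^N the map X_N ↦ 𝔭_N^P(s; X_N) is measurable from (𝒳,ℬ)^N into ℝ. -/
open MeasureTheory Filter Topology Metric Set
open scoped ENNReal NNReal Classical

noncomputable section

namespace Paper

variable {𝓨 𝓧 Ωd : Type*} [MeasurableSpace 𝓨] [MeasurableSpace 𝓧] [MeasurableSpace Ωd]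

section Statement6Aux

variable {N n : ℕ}

/-- The odds `p i / (1 - p i)`. -/
private def odds' (p : Fin N → ℝ) (i : Fin N) : ℝ := p i / (1 - p i)

private lemma odds_pos {p : Fin N → ℝ} (hp : ∀ i, p i ∈ Set.Ioo (0:ℝ) 1) (i : Fin N) :
    0 < odds' p i := div_pos (hp i).1 (by have := (hp i).2; linarith)

private lemma odds_recover {p : Fin N → ℝ} (hp : ∀ i, p i ∈ Set.Ioo (0:ℝ) 1) (i : Fin N) :
    odds' p i / (1 + odds' p i) = p i := by
  have h1 : (1:ℝ) - p i ≠ 0 := by have := (hp i).2; intro h; linarith [sub_eq_zero.mp h]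
  unfold odds'
  have h2 : 1 + p i / (1 - p i) = 1 / (1 - p i) := by field_simp; ring
  rw [h2, div_div_eq_mul_div, div_one, div_mul_cancel₀ _ h1]

private lemma meas_wt_of_meas {𝓧 : Type*} [MeasurableSpace 𝓧]
    {p : 𝓧 → Fin N → ℝ} (hp : Measurable p) (A : Finset (Fin N)) :
    Measurable fun x => poissonWt (p x) A := by
  unfold poissonWt
  exact (Finset.measurable_prod _ fun i _ => (measurable_pi_apply i).comp hp).mul
    (Finset.measurable_prod _ fun i _ =>
      measurable_const.sub ((measurable_pi_apply i).comp hp))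

private lemma meas_pmf_of_wt {𝓧 : Type*} [MeasurableSpace 𝓧]
    {p : 𝓧 → Fin N → ℝ}
    (hw : ∀ A : Finset (Fin N), Measurable fun x => poissonWt (p x) A)
    (A : Finset (Fin N)) : Measurable fun x => cpsPmf N n (p x) A := by
  unfold cpsPmf
  by_cases hA : A.card = n
  · simp only [hA, if_true]
    exact (hw A).div (Finset.measurable_sum _ fun B _ => hw B)
  · simp only [hA, if_false]
    exact measurable_const

private lemma meas_incl_of_pmf {𝓧 : Type*} [MeasurableSpace 𝓧]
    {p : 𝓧 → Fin N → ℝ}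
    (hm : ∀ A : Finset (Fin N), Measurable fun x => cpsPmf N n (p x) A) :
    Measurable fun x => fun i => cpsIncl N n (p x) i := by
  apply measurable_pi_lambda
  intro i
  unfold cpsIncl
  exact Finset.measurable_sum _ fun A _ => hm A

private lemma poissonWt_odds {p : Fin N → ℝ} (hp : ∀ i, p i ∈ Set.Ioo (0:ℝ) 1)
    (A : Finset (Fin N)) :
    poissonWt p A = (∏ i, (1 - p i)) * ∏ i ∈ A, odds' p i := by
  have key : ∀ i ∈ A, (1 - p i) * odds' p i = p i := by
    intro i _
    have h1 : (1:ℝ) - p i ≠ 0 := by have := (hp i).2; intro h; linarith [sub_eq_zero.mp h]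
    unfold odds'
    field_simp
  unfold poissonWt
  symm
  calc (∏ i, (1 - p i)) * ∏ i ∈ A, odds' p i
      = ((∏ i ∈ A, (1 - p i)) * ∏ i ∈ Aᶜ, (1 - p i)) * ∏ i ∈ A, odds' p i := by
        rw [Finset.prod_mul_prod_compl]
    _ = ((∏ i ∈ A, (1 - p i)) * ∏ i ∈ A, odds' p i) * ∏ i ∈ Aᶜ, (1 - p i) := by ring
    _ = (∏ i ∈ A, ((1 - p i) * odds' p i)) * ∏ i ∈ Aᶜ, (1 - p i) := by
        rw [Finset.prod_mul_distrib]
    _ = (∏ i ∈ A, p i) * ∏ i ∈ Aᶜ, (1 - p i) := by rw [Finset.prod_congr rfl key]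

private lemma cpsPmf_odds {p : Fin N → ℝ} (hp : ∀ i, p i ∈ Set.Ioo (0:ℝ) 1)
    (A : Finset (Fin N)) :
    cpsPmf N n p A = if A.card = n then
      (∏ i ∈ A, odds' p i) /
        ∑ B ∈ Finset.univ.filter (fun B : Finset (Fin N) => B.card = n), ∏ i ∈ B, odds' p i
    else 0 := by
  unfold cpsPmf
  by_cases hA : A.card = n
  · simp only [hA, if_true]
    have hc : 0 < ∏ i, (1 - p i) :=
      Finset.prod_pos fun i _ => by have := (hp i).2; linarith
    rw [poissonWt_odds hp A,
      Finset.sum_congr rfl (fun B _ => poissonWt_odds hp B), ← Finset.mul_sum,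
      mul_div_mul_left _ _ (ne_of_gt hc)]
  · simp only [hA, if_false]

private lemma log_diff_nonneg {x y : ℝ} (hx : 0 < x) (hy : 0 < y) :
    0 ≤ (x - y) * (Real.log x - Real.log y) := by
  rcases le_total x y with h | h
  · nlinarith [Real.log_le_log hx h]
  · nlinarith [Real.log_le_log hy h]

private lemma log_diff_eq_zero {x y : ℝ} (hx : 0 < x) (hy : 0 < y)
    (h : (x - y) * (Real.log x - Real.log y) = 0) : x = y := by
  rcases lt_trichotomy x y with h' | h' | h'
  · exfalso; have h2 := Real.log_lt_log hx h'; nlinarith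
  · exact h'
  · exfalso; have h2 := Real.log_lt_log hy h'; nlinarith

private lemma odds_mono {x y : ℝ} (hx : 0 < x) (h : x < y) : x / (1 + x) < y / (1 + y) := by
  rw [div_lt_div_iff₀ (by linarith) (by linarith)]
  nlinarith

private lemma cpsIncl_eq_sum {p : Fin N → ℝ} (hp : ∀ i, p i ∈ Set.Ioo (0:ℝ) 1) (i : Fin N) :
    cpsIncl N n p i =
      ∑ A ∈ (Finset.univ.filter (fun B : Finset (Fin N) => B.card = n)).filter
          (fun A => i ∈ A),
        (∏ j ∈ A, odds' p j) /
          ∑ B ∈ Finset.univ.filter (fun B : Finset (Fin N) => B.card = n),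
            ∏ j ∈ B, odds' p j := by
  unfold cpsIncl
  rw [← Finset.sum_subset
      (show (Finset.univ.filter (fun B : Finset (Fin N) => B.card = n)).filter
          (fun A => i ∈ A) ⊆ Finset.univ.filter (fun A : Finset (Fin N) => i ∈ A) by
        intro A hA
        simp only [Finset.mem_filter, Finset.mem_univ, true_and] at hA ⊢
        exact hA.2)
      (by
        intro A hA hA'
        simp only [Finset.mem_filter, Finset.mem_univ, true_and] at hA hA'
        have hcard : ¬ A.card = n := fun hc => hA' ⟨hc, hA⟩
        simp [cpsPmf, hcard])]
  refine Finset.sum_congr rfl fun A hA => ?_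
  simp only [Finset.mem_filter, Finset.mem_univ, true_and] at hA
  rw [cpsPmf_odds hp A, if_pos hA.1]

private lemma cpsIncl_injective (N n : ℕ) (p q : Fin N → ℝ)
    (hp : ∀ i, p i ∈ Set.Ioo (0:ℝ) 1) (hq : ∀ i, q i ∈ Set.Ioo (0:ℝ) 1)
    (hcp : ∑ i, p i = (n : ℝ)) (hcq : ∑ i, q i = (n : ℝ))
    (hπ : ∀ i, cpsIncl N n p i = cpsIncl N n q i) : p = q := by
  classical
  rcases Nat.eq_zero_or_pos N with hN | hN
  · subst hN; funext i; exact i.elim0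
  have : Nonempty (Fin N) := Fin.pos_iff_nonempty.1 hN
  have huniv : (Finset.univ : Finset (Fin N)).Nonempty := Finset.univ_nonempty
  have hn0 : 0 < n := by
    have h1 : (0:ℝ) < ∑ i, p i := Finset.sum_pos (fun i _ => (hp i).1) huniv
    rw [hcp] at h1; exact_mod_cast h1
  have hnN : n < N := by
    have h1 : ∑ i, p i < ∑ _i : Fin N, (1:ℝ) :=
      Finset.sum_lt_sum_of_nonempty huniv fun i _ => (hp i).2
    rw [hcp] at h1
    simp only [Finset.sum_const, Finset.card_univ, Fintype.card_fin, nsmul_eq_mul,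
      mul_one] at h1
    exact_mod_cast h1
  set α := odds' p with hαdef
  set β := odds' q with hβdef
  have hαpos : ∀ i, 0 < α i := odds_pos hp
  have hβpos : ∀ i, 0 < β i := odds_pos hq
  set Ω : Finset (Finset (Fin N)) := Finset.univ.filter (fun B => B.card = n) with hΩdef
  have hmemΩ : ∀ {A : Finset (Fin N)}, A ∈ Ω ↔ A.card = n := by
    intro A; simp [hΩdef]
  have hΩne : Ω.Nonempty := by
    obtain ⟨B, -, hB⟩ := Finset.exists_subset_card_eq (s := (Finset.univ : Finset (Fin N))) (n := n)
      (by simpa using hnN.le)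
    exact ⟨B, hmemΩ.2 hB⟩
  set Zα := ∑ B ∈ Ω, ∏ j ∈ B, α j with hZα
  set Zβ := ∑ B ∈ Ω, ∏ j ∈ B, β j with hZβ
  have hZαpos : 0 < Zα :=
    Finset.sum_pos (fun B _ => Finset.prod_pos fun j _ => hαpos j) hΩne
  have hZβpos : 0 < Zβ :=
    Finset.sum_pos (fun B _ => Finset.prod_pos fun j _ => hβpos j) hΩne
  -- equal marginals
  have hmarg : ∀ i : Fin N,
      ∑ A ∈ Ω.filter (fun A => i ∈ A), (∏ j ∈ A, α j) / Zα
        = ∑ A ∈ Ω.filter (fun A => i ∈ A), (∏ j ∈ A, β j) / Zβ := by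
    intro i
    have h1 := (cpsIncl_eq_sum (n := n) hp i).symm.trans
      ((hπ i).trans (cpsIncl_eq_sum (n := n) hq i))
    exact h1
  -- equal linear statistics
  have hlin : ∀ d : Fin N → ℝ,
      ∑ A ∈ Ω, ((∏ j ∈ A, α j) / Zα - (∏ j ∈ A, β j) / Zβ) * (∑ i ∈ A, d i) = 0 := by
    intro d
    have swap : ∀ γ : Finset (Fin N) → ℝ,
        ∑ A ∈ Ω, γ A * ∑ i ∈ A, d i
          = ∑ i : Fin N, d i * ∑ A ∈ Ω.filter (fun A => i ∈ A), γ A := by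
      intro γ
      calc ∑ A ∈ Ω, γ A * ∑ i ∈ A, d i
          = ∑ A ∈ Ω, ∑ i : Fin N, (if i ∈ A then γ A * d i else 0) := by
            refine Finset.sum_congr rfl fun A _ => ?_
            rw [Finset.mul_sum, Finset.sum_ite_mem, Finset.univ_inter]
        _ = ∑ i : Fin N, ∑ A ∈ Ω, (if i ∈ A then γ A * d i else 0) := Finset.sum_comm
        _ = ∑ i : Fin N, d i * ∑ A ∈ Ω.filter (fun A => i ∈ A), γ A := by
            refine Finset.sum_congr rfl fun i _ => ?_
            rw [← Finset.sum_filter, Finset.mul_sum]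
            exact Finset.sum_congr rfl fun A _ => mul_comm _ _
    rw [swap]
    refine Finset.sum_eq_zero fun i _ => ?_
    have hsplit := Finset.sum_sub_distrib (s := Ω.filter (fun A => i ∈ A))
      (f := fun A => (∏ j ∈ A, α j) / Zα) (g := fun A => (∏ j ∈ A, β j) / Zβ)
    rw [hsplit, hmarg i, sub_self, mul_zero]
  -- the ratio function
  set c : Fin N → ℝ := fun i => α i / β i with hcdef
  have hcpos : ∀ i, 0 < c i := fun i => div_pos (hαpos i) (hβpos i)
  have hαβ : ∀ i, α i = β i * c i := fun i => by
    show α i = β i * (α i / β i)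
    rw [mul_comm, div_mul_cancel₀ _ (ne_of_gt (hβpos i))]
  have hprod : ∀ A : Finset (Fin N), ∏ j ∈ A, α j = (∏ j ∈ A, β j) * ∏ j ∈ A, c j := by
    intro A
    rw [← Finset.prod_mul_distrib]
    exact Finset.prod_congr rfl fun j _ => hαβ j
  set r : Finset (Fin N) → ℝ := fun A => ∏ j ∈ A, c j with hrdef
  have hrpos : ∀ A, 0 < r A := fun A => Finset.prod_pos fun j _ => hcpos j
  set R := Zα / Zβ with hRdef
  have hRpos : 0 < R := div_pos hZαpos hZβpos
  -- Σ Q = 1, Σ Q r = R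
  have hQsum : ∑ A ∈ Ω, (∏ j ∈ A, β j) / Zβ = 1 := by
    rw [← Finset.sum_div, ← hZβ, div_self (ne_of_gt hZβpos)]
  have hQrsum : ∑ A ∈ Ω, ((∏ j ∈ A, β j) / Zβ) * r A = R := by
    rw [hRdef, hZα, Finset.sum_div]
    refine Finset.sum_congr rfl fun A _ => ?_
    rw [hprod A]
    ring
  -- key: r is constant equal to R on Ω
  have hrR : ∀ A ∈ Ω, r A = R := by
    have hS0 : ∑ A ∈ Ω, ((∏ j ∈ A, β j) / Zβ) *
        ((r A - R) * (Real.log (r A) - Real.log R)) = 0 := by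
      have hT1 : ∑ A ∈ Ω, ((∏ j ∈ A, β j) / Zβ) * (r A - R) = 0 := by
        have : ∑ A ∈ Ω, ((∏ j ∈ A, β j) / Zβ) * (r A - R)
            = (∑ A ∈ Ω, ((∏ j ∈ A, β j) / Zβ) * r A)
              - R * ∑ A ∈ Ω, (∏ j ∈ A, β j) / Zβ := by
          rw [Finset.mul_sum, ← Finset.sum_sub_distrib]
          exact Finset.sum_congr rfl fun A _ => by ring
        rw [this, hQrsum, hQsum, mul_one, sub_self]
      have hT2 : ∑ A ∈ Ω, ((∏ j ∈ A, β j) / Zβ) * (r A - R) * Real.log (r A) = 0 := by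
        have hlog : ∀ A ∈ Ω, Real.log (r A) = ∑ i ∈ A, Real.log (c i) := by
          intro A _
          exact Real.log_prod (s := A) (f := c) fun j _ => (ne_of_gt (hcpos j))
        have key : ∀ A ∈ Ω, ((∏ j ∈ A, β j) / Zβ) * (r A - R)
            = R * ((∏ j ∈ A, α j) / Zα - (∏ j ∈ A, β j) / Zβ) := by
          intro A _
          rw [hprod A, hRdef]
          field_simp
          ring
        calc ∑ A ∈ Ω, ((∏ j ∈ A, β j) / Zβ) * (r A - R) * Real.log (r A)
            = ∑ A ∈ Ω, R * (((∏ j ∈ A, α j) / Zα - (∏ j ∈ A, β j) / Zβ)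
                * (∑ i ∈ A, Real.log (c i))) := by
              refine Finset.sum_congr rfl fun A hA => ?_
              rw [key A hA, hlog A hA]; ring
          _ = R * ∑ A ∈ Ω, ((∏ j ∈ A, α j) / Zα - (∏ j ∈ A, β j) / Zβ)
                * (∑ i ∈ A, Real.log (c i)) := by rw [Finset.mul_sum]
          _ = 0 := by rw [hlin (fun i => Real.log (c i)), mul_zero]
      have expand : ∑ A ∈ Ω, ((∏ j ∈ A, β j) / Zβ) *
          ((r A - R) * (Real.log (r A) - Real.log R))
          = (∑ A ∈ Ω, ((∏ j ∈ A, β j) / Zβ) * (r A - R) * Real.log (r A))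
            - Real.log R * ∑ A ∈ Ω, ((∏ j ∈ A, β j) / Zβ) * (r A - R) := by
        rw [Finset.mul_sum, ← Finset.sum_sub_distrib]
        exact Finset.sum_congr rfl fun A _ => by ring
      rw [expand, hT1, hT2, mul_zero, sub_zero]
    intro A hA
    have hterms : ∀ A ∈ Ω, 0 ≤ ((∏ j ∈ A, β j) / Zβ) *
        ((r A - R) * (Real.log (r A) - Real.log R)) := by
      intro A _
      exact mul_nonneg
        (le_of_lt (div_pos (Finset.prod_pos fun j _ => hβpos j) hZβpos))
        (log_diff_nonneg (hrpos A) hRpos)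
    have hzero := (Finset.sum_eq_zero_iff_of_nonneg hterms).1 hS0 A hA
    have hQpos : 0 < (∏ j ∈ A, β j) / Zβ :=
      div_pos (Finset.prod_pos fun j _ => hβpos j) hZβpos
    have : (r A - R) * (Real.log (r A) - Real.log R) = 0 := by
      rcases mul_eq_zero.1 hzero with h | h
      · exact absurd h (ne_of_gt hQpos)
      · exact h
    exact log_diff_eq_zero (hrpos A) hRpos this
  -- c is constant
  have hcconst : ∀ i j : Fin N, c i = c j := by
    intro i j
    rcases eq_or_ne i j with rfl | hij
    · rfl
    obtain ⟨S, hSsub, hScard⟩ := Finset.exists_subset_card_eq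
      (s := (Finset.univ : Finset (Fin N)) \ {i, j}) (n := n - 1) (by
        rw [Finset.card_sdiff_of_subset (Finset.subset_univ _), Finset.card_pair hij,
          Finset.card_univ, Fintype.card_fin]
        omega)
    have hiS : i ∉ S := fun h => by simpa using hSsub h
    have hjS : j ∉ S := fun h => by simpa using hSsub h
    have hAΩ : insert i S ∈ Ω := hmemΩ.2 (by
      rw [Finset.card_insert_of_notMem hiS, hScard]; omega)
    have hBΩ : insert j S ∈ Ω := hmemΩ.2 (by
      rw [Finset.card_insert_of_notMem hjS, hScard]; omega)
    have h1 : c i * ∏ j' ∈ S, c j' = R := by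
      rw [← Finset.prod_insert hiS]; exact hrR _ hAΩ
    have h2 : c j * ∏ j' ∈ S, c j' = R := by
      rw [← Finset.prod_insert hjS]; exact hrR _ hBΩ
    have hrS : 0 < ∏ j' ∈ S, c j' := Finset.prod_pos fun j' _ => hcpos j'
    exact mul_right_cancel₀ (ne_of_gt hrS) (h1.trans h2.symm)
  -- conclusion via canonical constraint
  set i₀ : Fin N := ⟨0, hN⟩ with hi₀
  set t := c i₀ with htdef
  have htpos : 0 < t := hcpos i₀
  have hαt : ∀ i, α i = t * β i := by
    intro i
    have hci : α i / β i = t := hcconst i i₀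
    exact (div_eq_iff (ne_of_gt (hβpos i))).1 hci
  have hpq : ∀ i, p i = α i / (1 + α i) := fun i => (odds_recover hp i).symm
  have hqq : ∀ i, q i = β i / (1 + β i) := fun i => (odds_recover hq i).symm
  have ht1 : t = 1 := by
    by_contra hne
    rcases lt_or_gt_of_ne hne with hlt | hgt
    · have hsum : ∑ i, p i < ∑ i, q i := by
        refine Finset.sum_lt_sum_of_nonempty huniv fun i _ => ?_
        rw [hpq i, hqq i, hαt i]
        exact odds_mono (mul_pos htpos (hβpos i)) (by nlinarith [hβpos i])
      rw [hcp, hcq] at hsum; exact lt_irrefl _ hsum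
    · have hsum : ∑ i, q i < ∑ i, p i := by
        refine Finset.sum_lt_sum_of_nonempty huniv fun i _ => ?_
        rw [hpq i, hqq i, hαt i]
        exact odds_mono (hβpos i) (by nlinarith [hβpos i])
      rw [hcp, hcq] at hsum; exact lt_irrefl _ hsum
  funext i
  rw [hpq i, hqq i, hαt i, ht1, one_mul]

private lemma meas_p_of_incl {𝓧 : Type*} [MeasurableSpace 𝓧] (N n : ℕ)
    (p : (Fin N → 𝓧) → Fin N → ℝ)
    (hp : ∀ x i, p x i ∈ Set.Ioo (0:ℝ) 1)
    (hcanon : ∀ x, ∑ i, p x i = (n : ℝ))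
    (h : Measurable fun x => fun i => cpsIncl N n (p x) i) : Measurable p := by
  classical
  set D : Set (Fin N → ℝ) :=
    {v | (∀ i, v i ∈ Set.Ioo (0:ℝ) 1) ∧ ∑ i, v i = (n:ℝ)} with hD
  have hDmeas : MeasurableSet D := by
    have hDeq : D = (⋂ i, (fun v : Fin N → ℝ => v i) ⁻¹' Set.Ioo 0 1) ∩
        ((fun v : Fin N → ℝ => ∑ i, v i) ⁻¹' {(n:ℝ)}) := by
      ext v
      simp [hD, Set.mem_iInter]
    rw [hDeq]
    exact (MeasurableSet.iInter fun i =>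
        (measurable_pi_apply i) measurableSet_Ioo).inter
      ((Finset.measurable_sum _ fun i _ => measurable_pi_apply i)
        (measurableSet_singleton _))
  have hinclmeas : Measurable fun v : Fin N → ℝ => fun i => cpsIncl N n v i :=
    meas_incl_of_pmf (meas_pmf_of_wt (meas_wt_of_meas measurable_id))
  set Φ : (Fin N → ℝ) → (Fin N → ℝ) × Bool :=
    fun v => if v ∈ D then ((fun i => cpsIncl N n v i), true) else (v, false) with hΦ
  have hΦmeas : Measurable Φ :=
    Measurable.ite hDmeas (hinclmeas.prodMk measurable_const)
      (measurable_id.prodMk measurable_const)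
  have hΦinj : Function.Injective Φ := by
    intro u v huv
    by_cases hu : u ∈ D <;> by_cases hv : v ∈ D <;>
      simp only [hΦ, hu, hv, if_true, if_false, Prod.mk.injEq] at huv
    · exact cpsIncl_injective N n u v hu.1 hv.1 hu.2 hv.2 (fun i => congrFun huv.1 i)
    · exact absurd huv.2 (by simp)
    · exact absurd huv.2 (by simp)
    · exact huv.1
  have hemb : MeasurableEmbedding Φ := hΦmeas.measurableEmbedding hΦinj
  obtain ⟨ψ, hψmeas, hψ⟩ := hemb.exists_measurable_extend measurable_id
    (fun _ => ⟨fun _ => 0⟩)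
  have hrepr : p = fun x => ψ ((fun i => cpsIncl N n (p x) i), true) := by
    funext x
    have hx : p x ∈ D := ⟨hp x, hcanon x⟩
    have hΦx : Φ (p x) = ((fun i => cpsIncl N n (p x) i), true) := by
      simp only [hΦ, hx, if_true]
    rw [← hΦx]
    exact (congrFun hψ (p x)).symm
  rw [hrepr]
  exact hψmeas.comp (h.prodMk measurable_const)

private lemma meas_p_of_wt {𝓧 : Type*} [MeasurableSpace 𝓧]
    (p : (Fin N → 𝓧) → Fin N → ℝ) (hp : ∀ x i, p x i ∈ Set.Ioo (0:ℝ) 1)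
    (hw : ∀ A : Finset (Fin N), Measurable fun x => poissonWt (p x) A) :
    Measurable p := by
  apply measurable_pi_lambda
  intro i
  have key : ∀ x, p x i =
      (poissonWt (p x) {i} / poissonWt (p x) ∅) /
        (1 + poissonWt (p x) {i} / poissonWt (p x) ∅) := by
    intro x
    have hP : (0:ℝ) < ∏ j, (1 - p x j) :=
      Finset.prod_pos fun j _ => by have := (hp x j).2; linarith
    have h0 : poissonWt (p x) ∅ = ∏ j, (1 - p x j) := by
      simp [poissonWt]
    have h1 : poissonWt (p x) {i} = (∏ j, (1 - p x j)) * odds' (p x) i := by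
      rw [poissonWt_odds (hp x) {i}, Finset.prod_singleton]
    have hodds : poissonWt (p x) {i} / poissonWt (p x) ∅ = odds' (p x) i := by
      rw [h0, h1, mul_comm, mul_div_assoc, div_self (ne_of_gt hP), mul_one]
    rw [hodds, odds_recover (hp x) i]
  have heq : (fun x => p x i) = fun x =>
      (poissonWt (p x) {i} / poissonWt (p x) ∅) /
        (1 + poissonWt (p x) {i} / poissonWt (p x) ∅) := funext key
  rw [heq]
  exact ((hw {i}).div (hw ∅)).div (measurable_const.add ((hw {i}).div (hw ∅)))

end Statement6Aux

theorem statement6 {𝓧 : Type*} [MeasurableSpace 𝓧] (N n : ℕ)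
    (p : (Fin N → 𝓧) → Fin N → ℝ)
    (hp : ∀ x i, p x i ∈ Set.Ioo (0:ℝ) 1)
    (hcanon : ∀ x, ∑ i, p x i = (n : ℝ)) :
    ((∀ A : Finset (Fin N), Measurable fun x => cpsPmf N n (p x) A) ↔
      Measurable fun x => fun i => cpsIncl N n (p x) i) ∧
    ((Measurable fun x => fun i => cpsIncl N n (p x) i) ↔ Measurable p) ∧
    (Measurable p ↔ ∀ A : Finset (Fin N), Measurable fun x => poissonWt (p x) A) := by
  refine ⟨⟨fun h => meas_incl_of_pmf h, fun h A =>
      meas_pmf_of_wt (meas_wt_of_meas (meas_p_of_incl N n p hp hcanon h)) A⟩,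
    ⟨fun h => meas_p_of_incl N n p hp hcanon h,
      fun h => meas_incl_of_pmf (meas_pmf_of_wt (meas_wt_of_meas h))⟩,
    ⟨fun h A => meas_wt_of_meas h A, fun h => meas_p_of_wt p hp h⟩⟩

end Paper
end
end
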